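/- arXiv:2405.11103 — 5 statements merged into one kernel-verified Lean document; each statement's English description precedes it below -/
import Mathlib

section
/- Let L be the base-3 look-and-say operation. If A is a nonempty list ending in the digit 0 and B is a nonempty list beginning with a nonzero digit, then L(A ++ B) = L(A) ++ L(B). -/
/-- The base-3 look-and-say operation: each maximal run of a repeated digit `d`
of length `k` is replaced by the base-3 digits of `k` (most significant first)
followed by `d`. -/
def lookSay3 (A : List ℕ) : List ℕ :=
  (A.splitBy (fun a b => a == b)).flatMap
    (fun r => (Nat.digits 3 r.length).reverse ++ [r.headI])

private theorem splitBy_loop_gs {α} (R : α → α → Bool) (l : List α) (ag : α)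
    (g : List α) (gs : List (List α)) :
    List.splitBy.loop R l ag g gs = gs.reverse ++ List.splitBy.loop R l ag g [] := by
  induction l generalizing ag g gs with
  | nil => simp [List.splitBy.loop]
  | cons a as ih =>
    simp only [List.splitBy.loop]
    cases h : R ag a with
    | false =>
      dsimp only
      rw [ih a [] ((ag::g).reverse :: gs), ih a [] [(ag::g).reverse]]; simp
    | true =>
      dsimp only
      exact ih ..

private theorem splitBy_loop_append {α} (R : α → α → Bool) (b : α) (bs : List α)
    (as : List α) (ag : α) (g : List α)
    (hbr : R ((ag :: as).getLast (by simp)) b = false) :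
    List.splitBy.loop R (as ++ b :: bs) ag g [] =
      List.splitBy.loop R as ag g [] ++ List.splitBy.loop R bs b [] [] := by
  induction as generalizing ag g with
  | nil =>
    simp only [List.getLast_singleton] at hbr
    simp only [List.nil_append, List.splitBy.loop, hbr]
    rw [splitBy_loop_gs]
  | cons a as ih =>
    rw [List.getLast_cons_cons] at hbr
    simp only [List.cons_append, List.splitBy.loop]
    cases h : R ag a with
    | false =>
      dsimp only
      rw [splitBy_loop_gs R (as ++ b :: bs) a [] [(ag::g).reverse], ih _ _ hbr,
        splitBy_loop_gs R as a [] [(ag::g).reverse]]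
      simp
    | true =>
      dsimp only
      exact ih _ _ hbr

theorem stmt_7 (A B : List ℕ) (hA : A ≠ []) (hB : B ≠ [])
    (hA0 : A.getLast? = some 0)
    (hBhead : ∃ d, B.head? = some d ∧ d ≠ 0) :
    lookSay3 (A ++ B) = lookSay3 A ++ lookSay3 B := by
  obtain ⟨d, hd, hd0⟩ := hBhead
  obtain ⟨b, bs, rfl⟩ : ∃ b bs, B = b :: bs := by
    cases B with
    | nil => exact absurd rfl hB
    | cons b bs => exact ⟨b, bs, rfl⟩
  obtain ⟨a, as, rfl⟩ : ∃ a as, A = a :: as := by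
    cases A with
    | nil => exact absurd rfl hA
    | cons a as => exact ⟨a, as, rfl⟩
  simp only [List.head?_cons, Option.some.injEq] at hd
  subst hd
  have hlast : (a :: as).getLast (by simp) = 0 := by
    have := List.getLast?_eq_getLast (l := a :: as) (by simp)
    rw [hA0] at this
    exact (Option.some.injEq _ _).mp this.symm
  have key : (a :: as ++ b :: bs).splitBy (fun a b => a == b) =
      (a :: as).splitBy (fun a b => a == b) ++ (b :: bs).splitBy (fun a b => a == b) := by
    simp only [List.cons_append, List.splitBy]
    apply splitBy_loop_append
    rw [show ((a :: as).getLast (by simp)) = 0 from hlast]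
    simp [hd0.symm]
  rw [List.cons_append] at key
  simp only [lookSay3, List.cons_append, key, List.flatMap_append]
end

section
/- Let L be the base-3 look-and-say operation and suppose A ends in 0 with no other occurrence of 0, and B begins with a nonzero digit. Then for every n ≥ 0, Lⁿ(A ++ B) = Lⁿ(A) ++ Lⁿ(B), provided every iterate Lⁿ(A) still ends in 0 and every iterate Lⁿ(B) still begins with a nonzero digit. Show in particular that if A = [1,0] (the electron E) then Lⁿ(A++B) = Lⁿ(A) ++ Lⁿ(B) for all n and all B beginning with a digit other than 0 and 1. -/
namespace LookSayAux

open List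

theorem loop_eq_append {α : Type*} (R : α → α → Bool) (l : List α) (a : α) (g : List α)
    (gs : List (List α)) : splitBy.loop R l a g gs = gs.reverse ++ splitBy.loop R l a g [] := by
  induction l generalizing a g gs with
  | nil => simp [splitBy.loop]
  | cons b l IH =>
    simp_rw [splitBy.loop]
    split <;> rw [IH]
    conv_rhs => rw [IH]
    simp

theorem loop_append {α : Type*} (R : α → α → Bool) (l₁ : List α) (b : α) (l₂ : List α) :
    ∀ (a : α) (g : List α), R ((a :: l₁).getLast (cons_ne_nil _ _)) b = false →
    splitBy.loop R (l₁ ++ b :: l₂) a g [] =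
      splitBy.loop R l₁ a g [] ++ splitBy R (b :: l₂) := by
  induction l₁ with
  | nil =>
    intro a g h
    simp only [getLast_singleton] at h
    simp only [nil_append, splitBy.loop, h]
    rw [loop_eq_append]
    simp [splitBy, splitBy.loop]
  | cons c l₁ IH =>
    intro a g h
    rw [getLast_cons (cons_ne_nil _ _)] at h
    simp only [cons_append, splitBy.loop]
    cases hR : R a c with
    | true =>
      simp only [splitBy.loop, hR]
      exact IH c (a :: g) h
    | false =>
      simp only [splitBy.loop, hR]
      rw [loop_eq_append]
      rw [IH c [] h]
      conv_rhs => rw [loop_eq_append]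
      simp

theorem lookSay3_append {A B : List ℕ} {x y : ℕ} (hx : A.getLast? = some x)
    (hy : B.head? = some y) (hxy : x ≠ y) :
    lookSay3 (A ++ B) = lookSay3 A ++ lookSay3 B := by
  have hA : A ≠ [] := by rintro rfl; simp at hx
  have hB : B ≠ [] := by rintro rfl; simp at hy
  obtain ⟨a, l₁, rfl⟩ := exists_cons_of_ne_nil hA
  obtain ⟨b, l₂, rfl⟩ := exists_cons_of_ne_nil hB
  have hlast : (a :: l₁).getLast (cons_ne_nil _ _) = x := by
    rw [getLast?_eq_getLast (cons_ne_nil _ _)] at hx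
    exact Option.some_injective _ hx
  have hb : b = y := by simpa using hy
  subst hb
  have hR : ((fun a b : ℕ => a == b) ((a :: l₁).getLast (cons_ne_nil _ _)) b) = false := by
    rw [hlast]
    simpa using hxy
  unfold lookSay3
  rw [cons_append]
  show (splitBy.loop _ (l₁ ++ b :: l₂) a [] []).flatMap _ = _
  rw [loop_append _ _ _ _ _ _ hR, flatMap_append]
  rfl

theorem exists_first_group {B : List ℕ} (hB : B ≠ []) :
    ∃ g gs, B.splitBy (fun a b => a == b) = g :: gs ∧ g ≠ [] := by
  rcases h : B.splitBy (fun a b => a == b) with _ | ⟨g, gs⟩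
  · exfalso
    apply hB
    have := List.flatten_splitBy (fun a b : ℕ => a == b) B
    rw [h] at this
    simpa using this.symm
  · exact ⟨g, gs, rfl, List.ne_nil_of_mem_splitBy (h ▸ mem_cons_self)⟩

theorem head_lookSay3 {B : List ℕ} (hB : B ≠ []) :
    ∃ d, (lookSay3 B).head? = some d ∧ d ≠ 0 := by
  obtain ⟨g, gs, hsplit, hg⟩ := exists_first_group hB
  have hlen : g.length ≠ 0 := by simpa using hg
  have hdig : Nat.digits 3 g.length ≠ [] := Nat.digits_ne_nil_iff_ne_zero.mpr hlen
  unfold lookSay3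
  rw [hsplit, flatMap_cons]
  refine ⟨(Nat.digits 3 g.length).getLast hdig, ?_, Nat.getLast_digit_ne_zero 3 hlen⟩
  rw [head?_append_of_ne_nil, head?_append_of_ne_nil, head?_reverse,
    getLast?_eq_getLast hdig]
  · simpa using hdig
  · simp [hdig]

theorem chain_headI_eq_getLast {g : List ℕ} (hg : g ≠ [])
    (hc : g.Chain' fun x y => (x == y : Bool)) : g.headI = g.getLast hg := by
  induction g with
  | nil => exact absurd rfl hg
  | cons a l IH =>
    cases l with
    | nil => simp
    | cons b l =>
      have h1 : (a == b) = true := (isChain_cons_cons.mp hc).1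
      have h2 := (isChain_cons_cons.mp hc).2
      have hab : a = b := by simpa using h1
      subst hab
      rw [getLast_cons (cons_ne_nil _ _)]
      simpa using IH (cons_ne_nil _ _) h2

theorem getLast_lookSay3 {B : List ℕ} (hB : B ≠ []) :
    (lookSay3 B).getLast? = B.getLast? := by
  have hne : B.splitBy (fun a b => a == b) ≠ [] := by
    obtain ⟨g, gs, h, _⟩ := exists_first_group hB
    simp [h]
  obtain h | ⟨gs, g, hsplit⟩ := List.eq_nil_or_concat' (B.splitBy (fun a b => a == b))
  · exact absurd h hne
  have hgmem : g ∈ B.splitBy (fun a b => a == b) := by rw [hsplit]; simp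
  have hg : g ≠ [] := List.ne_nil_of_mem_splitBy hgmem
  have hchain := List.isChain_of_mem_splitBy hgmem
  have hflat := List.flatten_splitBy (fun a b : ℕ => a == b) B
  unfold lookSay3
  rw [hsplit, flatMap_append, flatMap_cons, flatMap_nil]
  rw [getLast?_append]
  have h1 : ((Nat.digits 3 g.length).reverse ++ [g.headI] ++ []).getLast? = some g.headI := by
    simp
  rw [h1]
  have h2 : B.getLast? = some (g.getLast hg) := by
    rw [← hflat, hsplit, flatten_append]
    simp only [flatten_cons, flatten_nil, append_nil]
    rw [getLast?_append, getLast?_eq_getLast hg]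
    simp
  rw [h2, chain_headI_eq_getLast hg hchain]
  rfl

theorem main (A B : List ℕ) (hA : A.getLast? = some 0)
    (hAn : ∀ n : ℕ, (lookSay3^[n] A).getLast? = some 0)
    (hBn : ∀ n : ℕ, ∃ d, (lookSay3^[n] B).head? = some d ∧ d ≠ 0) :
    ∀ n : ℕ, lookSay3^[n] (A ++ B) = lookSay3^[n] A ++ lookSay3^[n] B := by
  intro n
  induction n with
  | zero => rfl
  | succ n IH =>
    obtain ⟨d, hd, hd0⟩ := hBn n
    rw [Function.iterate_succ_apply', Function.iterate_succ_apply',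
      Function.iterate_succ_apply', IH]
    exact lookSay3_append (hAn n) hd (fun h => hd0 h.symm)

end LookSayAux

theorem stmt_8 :
    (∀ A B : List ℕ, A.getLast? = some 0 → A.count 0 = 1 →
      (∀ n : ℕ, (lookSay3^[n] A).getLast? = some 0) →
      (∀ n : ℕ, ∃ d, (lookSay3^[n] B).head? = some d ∧ d ≠ 0) →
      ∀ n : ℕ, lookSay3^[n] (A ++ B) = lookSay3^[n] A ++ lookSay3^[n] B) ∧
    (∀ B : List ℕ, (∃ d, B.head? = some d ∧ d ≠ 0 ∧ d ≠ 1) →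
      ∀ n : ℕ, lookSay3^[n] ([1, 0] ++ B) =
        lookSay3^[n] [1, 0] ++ lookSay3^[n] B) := by
  constructor
  · intro A B hA _ hAn hBn
    exact LookSayAux.main A B hA hAn hBn
  · rintro B ⟨d, hd, hd0, _⟩
    apply LookSayAux.main
    · rfl
    · intro n
      induction n with
      | zero => rfl
      | succ n IH =>
        rw [Function.iterate_succ_apply']
        rw [LookSayAux.getLast_lookSay3, IH]
        intro hnil
        rw [hnil] at IH
        simp at IH
    · intro n
      induction n with
      | zero => exact ⟨d, hd, hd0⟩
      | succ n IH =>
        obtain ⟨e, he, _⟩ := IH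
        rw [Function.iterate_succ_apply']
        apply LookSayAux.head_lookSay3
        intro hnil
        rw [hnil] at he
        simp at he
end

section
/- Let Λ be the 8×8 fermion transition matrix (as a matrix over ℚ) with Λ(E,M)=Λ(E,T)=Λ(M,E)=Λ(D,U)=Λ(D,C)=Λ(B,T)=Λ(B,C)=Λ(U,M)=Λ(S,D)=Λ(T,B)=Λ(C,S)=1 and all other entries 0. Then the polynomial x³ − x − 1 divides the characteristic polynomial of Λ. -/
/-- The fermion transition matrix, rows/columns indexed in the order
E, M, D, B, U, S, T, C. -/
def Lam : Matrix (Fin 8) (Fin 8) ℚ :=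
  !![0, 1, 0, 0, 0, 0, 1, 0;
     1, 0, 0, 0, 0, 0, 0, 0;
     0, 0, 0, 0, 1, 0, 0, 1;
     0, 0, 0, 0, 0, 0, 1, 1;
     0, 1, 0, 0, 0, 0, 0, 0;
     0, 0, 1, 0, 0, 0, 0, 0;
     0, 0, 0, 1, 0, 0, 0, 0;
     0, 0, 0, 0, 0, 1, 0, 0]

set_option maxHeartbeats 1000000 in
open Polynomial in
theorem stmt_12 : (X ^ 3 - X - 1 : Polynomial ℚ) ∣ Lam.charpoly := by
  rw [← AdjoinRoot.mk_eq_zero, ← AdjoinRoot.aeval_eq]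
  set K := AdjoinRoot (X ^ 3 - X - 1 : Polynomial ℚ) with hK
  set α : K := AdjoinRoot.root (X ^ 3 - X - 1 : Polynomial ℚ) with hα
  have hroot : α ^ 3 = α + 1 := by
    have h0 : (Polynomial.aeval α) (X ^ 3 - X - 1 : Polynomial ℚ) = 0 := by
      rw [hα, AdjoinRoot.aeval_eq, AdjoinRoot.mk_self]
    simp only [map_sub, map_pow, Polynomial.aeval_X, map_one] at h0
    linear_combination h0
  set A : Matrix (Fin 8) (Fin 8) K := α • 1 - Lam.map (algebraMap ℚ K) with hA
  have hmap : Lam.map (algebraMap ℚ K) =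
      !![0, 1, 0, 0, 0, 0, 1, 0;
         1, 0, 0, 0, 0, 0, 0, 0;
         0, 0, 0, 0, 1, 0, 0, 1;
         0, 0, 0, 0, 0, 0, 1, 1;
         0, 1, 0, 0, 0, 0, 0, 0;
         0, 0, 1, 0, 0, 0, 0, 0;
         0, 0, 0, 1, 0, 0, 0, 0;
         0, 0, 0, 0, 0, 1, 0, 0] := by
    ext i j
    fin_cases i <;> fin_cases j <;>
      first
        | exact map_zero (algebraMap ℚ K)
        | exact map_one (algebraMap ℚ K)
  have key : (Polynomial.aeval α) Lam.charpoly = A.det := by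
    rw [Matrix.charpoly, AlgHom.map_det]
    congr 1
    ext i j
    by_cases h : i = j
    · subst h
      simp [Matrix.charmatrix_apply_eq, hA, Matrix.one_apply, Algebra.algebraMap_eq_smul_one]
    · simp [Matrix.charmatrix_apply_ne _ _ _ h, hA, Matrix.one_apply_ne h,
        Algebra.algebraMap_eq_smul_one]
  rw [key]
  set v : Fin 8 → K := ![α + α ^ 2, 1 + α, 1 + α, 1 + α, α ^ 2, α ^ 2, α ^ 2, α] with hv
  have hAv : A.mulVec v = 0 := by
    rw [hA, Matrix.sub_mulVec, Matrix.smul_mulVec, Matrix.one_mulVec, hmap,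
      sub_eq_zero]
    simp only [hv, Matrix.cons_mulVec, Matrix.cons_dotProduct, Matrix.dotProduct_of_isEmpty,
      Matrix.empty_mulVec, Matrix.smul_cons, Matrix.smul_empty, smul_eq_mul,
      funext_iff, Fin.forall_fin_succ, Matrix.cons_val_zero, Matrix.cons_val_succ,
      Fin.forall_fin_zero_pi, Matrix.head_cons, Matrix.tail_cons]
    refine ⟨?_, ?_, ?_, ?_, ?_, ?_, ?_, ?_, fun _ => trivial⟩ <;> first | linear_combination hroot | linear_combination -hroot | ring1
  have hdv : ∀ i, A.det * v i = 0 := by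
    intro i
    have h1 : A.det • v = A.adjugate.mulVec (A.mulVec v) := by
      rw [Matrix.mulVec_mulVec, Matrix.adjugate_mul, Matrix.smul_mulVec,
        Matrix.one_mulVec]
    have := congrFun h1 i
    rw [hAv, Matrix.mulVec_zero] at this
    simpa [smul_eq_mul] using this
  have e1 : A.det * (1 + α) = 0 := hdv 1
  have e7 : A.det * α = 0 := hdv 7
  linear_combination e1 - e7
end

section
/- Let L be the base-3 look-and-say operation. If a list A contains no run of length greater than m for some m > 7, then every run in L(A) has length strictly less than m. -/
open List

namespace LookSay3Aux

/-- encoding of one run -/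
def f (r : List ℕ) : List ℕ := (Nat.digits 3 r.length).reverse ++ [r.headI]

lemma const_of_chain : ∀ (l : List ℕ), l.Chain' (fun x y => x == y) → ∀ x ∈ l, x = l.headI
  | [], _, x, hx => by simp at hx
  | [a], _, x, hx => by simpa using hx
  | a :: b :: l, h, x, hx => by
    simp only [Chain', isChain_cons_cons] at h
    obtain ⟨hab, h⟩ := h
    have hab' : a = b := by simpa using hab
    rcases mem_cons.1 hx with rfl | hx
    · rfl
    · have := const_of_chain (b :: l) h x hx
      simp only [headI] at this ⊢
      omega

lemma chain'_mono_mem {α : Type*} {R S : α → α → Prop} :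
    ∀ {l : List α}, (∀ a ∈ l, ∀ b ∈ l, R a b → S a b) → l.Chain' R → l.Chain' S
  | [], _, _ => isChain_nil
  | [_], _, _ => isChain_singleton _
  | a :: b :: l, H, h => by
    simp only [Chain', isChain_cons_cons] at h ⊢
    refine ⟨H a (by simp) b (by simp) h.1, ?_⟩
    exact chain'_mono_mem (fun x hx y hy => H x (mem_cons_of_mem _ hx) y (mem_cons_of_mem _ hy)) h.2

lemma mem_of_prefix_long {x l rest : List ℕ} (hp : l <+: x ++ rest)
    (hlen : x.length ≤ l.length) : x <+: l := by
  have h1 : (x ++ rest).take x.length = x := by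
    rw [take_append_of_le_length le_rfl, take_length]
  have h2 : (x ++ rest).take x.length <+: (x ++ rest).take l.length :=
    take_prefix_take_left hlen
  rw [h1, ← prefix_iff_eq_take.1 hp] at h2
  exact h2

/-- a constant prefix with value `≠ d` can't reach past `g`. -/
lemma const_prefix_ne {g rest l : List ℕ} {d v : ℕ}
    (hc : ∀ x ∈ l, x = v) (hv : v ≠ d) (hp : l <+: (g ++ [d]) ++ rest) :
    l.length ≤ g.length := by
  by_contra hlen
  push_neg at hlen
  have hx : g ++ [d] <+: l := mem_of_prefix_long (by rwa [append_assoc] at hp) (by simp; omega)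
  exact hv ((hc d (hx.subset (by simp))).symm ▸ rfl)

variable {m : ℕ}

/-- constant prefix of encoded stream with value different from first run's value. -/
lemma prefix_ne {b : List ℕ} {B : List (List ℕ)} {l : List ℕ} {v : ℕ}
    (hb : b.length ≤ m)
    (hc : ∀ x ∈ l, x = v) (hv : v ≠ b.headI) (hp : l <+: (b :: B).flatMap f) :
    l.length ≤ (Nat.digits 3 m).length := by
  have : (b :: B).flatMap f = ((Nat.digits 3 b.length).reverse ++ [b.headI]) ++ B.flatMap f := by
    simp [f]
  rw [this] at hp
  have := const_prefix_ne hc hv hp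
  simpa using this.trans (by simpa using Nat.le_digits_len_le 3 b.length m hb)

/-- constant prefix of `(g' ++ [d]) ++ encoded stream` where the first run value differs from d. -/
lemma cross {g' : List ℕ} {d : ℕ} {B : List (List ℕ)} {l : List ℕ} {v : ℕ}
    (hg : g'.length ≤ (Nat.digits 3 m).length)
    (hB : ∀ b ∈ B, b.length ≤ m)
    (hhd : ∀ b ∈ B.head?, b.headI ≠ d)
    (hc : ∀ x ∈ l, x = v)
    (hp : l <+: (g' ++ [d]) ++ B.flatMap f) :
    l.length ≤ 2 * (Nat.digits 3 m).length + 1 := by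
  rcases le_or_gt l.length (g'.length + 1) with h | h
  · omega
  · have hx : g' ++ [d] <+: l := mem_of_prefix_long hp (by simp; omega)
    have hv : v = d := (hc d (hx.subset (by simp))).symm
    have hdrop : l.drop (g'.length + 1) <+: B.flatMap f := by
      have h2 := hp.drop ((g' ++ [d]).length)
      rw [drop_left] at h2
      simpa using h2
    cases B with
    | nil =>
      rw [flatMap_nil, prefix_nil] at hdrop
      have := congrArg List.length hdrop
      simp at this
      omega
    | cons b B' =>
      have hne : v ≠ b.headI := by
        have := hhd b rfl
        omega
      have h1 := prefix_ne (hB b (by simp)) (fun x hx => hc x (mem_of_mem_drop hx)) hne hdrop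
      have h2 : (l.drop (g'.length + 1)).length = l.length - (g'.length + 1) := by simp
      omega

lemma infix_bound : ∀ (B : List (List ℕ)), (∀ b ∈ B, b.length ≤ m) →
    B.Chain' (fun a b => a.headI ≠ b.headI) →
    ∀ l v, (∀ x ∈ l, x = v) → l <:+: B.flatMap f →
    l.length ≤ 2 * (Nat.digits 3 m).length + 1 := by
  intro B
  induction B with
  | nil =>
    intro _ _ l v _ hinf
    rw [flatMap_nil, infix_nil] at hinf
    simp [hinf]
  | cons b B ih =>
    intro hB hch l v hc hinf
    obtain ⟨u, w, huw⟩ := hinf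
    set g := (Nat.digits 3 b.length).reverse with hgdef
    have hflat : (b :: B).flatMap f = (g ++ [b.headI]) ++ B.flatMap f := by simp [f, hgdef]
    rcases le_or_gt (g.length + 1) u.length with h | h
    · -- l is an infix of the rest
      have h1 : l ++ w = ((g ++ [b.headI]) ++ B.flatMap f).drop u.length := by
        rw [← hflat, ← huw, append_assoc, drop_left]
      have h2 : ((g ++ [b.headI]) ++ B.flatMap f).drop u.length
          = (B.flatMap f).drop (u.length - (g.length + 1)) := by
        rw [drop_append]
        have : (g ++ [b.headI]).drop u.length = [] := by
          apply drop_eq_nil_of_le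
          simpa using h
        simp [this]
      have h3 : l <+: (B.flatMap f).drop (u.length - (g.length + 1)) := ⟨w, by rw [← h2, ← h1]⟩
      have h4 : l <:+: B.flatMap f := h3.isInfix.trans (drop_suffix _ _).isInfix
      exact ih (fun x hx => hB x (mem_cons_of_mem _ hx)) (isChain_cons.1 hch).2 l v hc h4
    · -- l is a prefix of (g.drop u.length ++ [b.headI]) ++ rest
      have h1 : l <+: ((g ++ [b.headI]) ++ B.flatMap f).drop u.length :=
        ⟨w, by rw [← hflat, ← huw, append_assoc, drop_left]⟩
      have h2 : ((g ++ [b.headI]) ++ B.flatMap f).drop u.length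
          = (g.drop u.length ++ [b.headI]) ++ B.flatMap f := by
        rw [drop_append_of_le_length (by simp; omega), drop_append_of_le_length (by omega)]
      rw [h2] at h1
      refine cross ?_ (fun x hx => hB x (mem_cons_of_mem _ hx)) ?_ hc h1
      · calc (g.drop u.length).length ≤ g.length := by simp
          _ ≤ (Nat.digits 3 m).length := by
            simpa [hgdef] using Nat.le_digits_len_le 3 b.length m (hB b (by simp))
      · intro b' hb'
        have := (isChain_cons.1 hch).1 b' hb'
        omega

lemma arith (hm : 7 < m) : 2 * (Nat.digits 3 m).length + 1 < m := by
  set D := (Nat.digits 3 m).length with hD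
  rcases le_or_gt D 3 with h | h
  · omega
  · have key : ∀ n, 4 ≤ n → 2 * n + 1 < 3 ^ (n - 1) := by
      intro n hn
      induction n, hn using Nat.le_induction with
      | base => norm_num
      | succ n hn ih =>
        have h3 : 3 ^ (n + 1 - 1) = 3 * 3 ^ (n - 1) := by
          rw [Nat.add_sub_cancel, ← pow_succ']
          congr 1
          omega
        omega
    have h1 : 3 ^ D ≤ 3 * m := Nat.base_pow_length_digits_le 3 m (by norm_num) (by omega)
    have h2 : 3 ^ D = 3 * 3 ^ (D - 1) := by
      rw [← pow_succ']
      congr 1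
      omega
    have h4 := key D (by omega)
    have h5 : 3 ^ (D - 1) ≤ m := by omega
    omega

end LookSay3Aux

open LookSay3Aux in
theorem stmt_14 (m : ℕ) (hm : 7 < m) (A : List ℕ)
    (hA : ∀ r ∈ A.splitBy (fun a b => a == b), r.length ≤ m) :
    ∀ r ∈ (lookSay3 A).splitBy (fun a b => a == b), r.length < m := by
  intro r hr
  set B := A.splitBy (fun a b => a == b) with hBdef
  have hLS : lookSay3 A = B.flatMap f := rfl
  have hrinf : r <:+: lookSay3 A := by
    have h1 : r <:+: ((lookSay3 A).splitBy (fun a b => a == b)).flatten :=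
      infix_of_mem_flatten hr
    rwa [flatten_splitBy] at h1
  have hconst : ∀ x ∈ r, x = r.headI := const_of_chain r (isChain_of_mem_splitBy hr)
  have hBconst : ∀ b ∈ B, ∀ x ∈ b, x = b.headI :=
    fun b hb => const_of_chain b (isChain_of_mem_splitBy hb)
  have hch0 := isChain_getLast_head_splitBy (fun a b => a == b) A
  have hch : B.Chain' (fun a b => a.headI ≠ b.headI) := by
    refine chain'_mono_mem (fun a ha b hb h => ?_) hch0
    obtain ⟨ha', hb', hab⟩ := h
    have h1 : a.getLast ha' = a.headI := hBconst a ha _ (getLast_mem ha')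
    have h2 : b.head hb' = b.headI := hBconst b hb _ (head_mem hb')
    rw [h1, h2] at hab
    simpa using hab
  have hbound := infix_bound B hA hch r r.headI hconst (hLS ▸ hrinf)
  have := arith (m := m) hm
  omega
end

section
/- Let L be the base-3 look-and-say operation. If every run in a list A has length at most 7, then L(L(A)) contains no substring [0,0], no substring [2,2,2,2], and no substring [1,1,1,1,1]. -/
namespace LS15

def blk (r : List ℕ) : List ℕ := (Nat.digits 3 r.length).reverse ++ [r.headI]

lemma lookSay3_eq (A : List ℕ) :
    lookSay3 A = ((A.splitBy (fun a b => a == b)).map blk).flatten := by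
  rw [lookSay3, List.flatMap_def]; rfl

lemma const_of_chain' {l : List ℕ} (h : l.Chain' fun x y => (x == y) = true) :
    l = List.replicate l.length l.headI := by
  induction l with
  | nil => rfl
  | cons a t ih =>
    cases t with
    | nil => rfl
    | cons b t' =>
      unfold List.Chain' at h
      rw [List.isChain_cons_cons] at h
      obtain ⟨hab, ht⟩ := h
      have hab' : a = b := by simpa using hab
      have h2 := ih ht
      subst hab'
      rw [List.length_cons, List.replicate_succ]
      simpa using h2

lemma run_spec {X r : List ℕ} (h : r ∈ X.splitBy (fun a b => a == b)) :
    r = List.replicate r.length r.headI ∧ 1 ≤ r.length ∧ r <:+: X := by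
  refine ⟨const_of_chain' (List.isChain_of_mem_splitBy h), ?_, ?_⟩
  · exact List.length_pos_iff.2 (List.ne_nil_of_mem_splitBy h)
  · have := List.infix_of_mem_flatten h
    rwa [List.flatten_splitBy] at this

lemma eq_headI_of_mem {r : List ℕ} (h : r = List.replicate r.length r.headI)
    {x : ℕ} (hx : x ∈ r) : x = r.headI :=
  List.eq_of_mem_replicate (h ▸ hx)

lemma chain'_imp_mem {α : Type*} {R S : α → α → Prop} :
    ∀ {l : List α}, (∀ a b, a ∈ l → b ∈ l → R a b → S a b) → l.Chain' R → l.Chain' S := by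
  intro l
  induction l with
  | nil => intro _ _; simp [List.Chain']
  | cons a t ih =>
    intro h hc
    cases t with
    | nil => simp [List.Chain']
    | cons b t' =>
      unfold List.Chain' at hc ⊢
      rw [List.isChain_cons_cons] at hc ⊢
      exact ⟨h a b (by simp) (by simp) hc.1,
        ih (fun x y hx hy => h x y (List.mem_cons_of_mem _ hx) (List.mem_cons_of_mem _ hy)) hc.2⟩

lemma chain'_headI_ne (X : List ℕ) :
    (X.splitBy (fun a b => a == b)).Chain' (fun a b => a.headI ≠ b.headI) := by
  refine chain'_imp_mem ?_ (List.isChain_getLast_head_splitBy (fun a b => a == b) X)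
  rintro a b ha hb ⟨ha', hb', hne⟩
  have h1 : a.getLast ha' = a.headI :=
    eq_headI_of_mem (run_spec ha).1 (List.getLast_mem ha')
  have h2 : b.head hb' = b.headI :=
    eq_headI_of_mem (run_spec hb).1 (List.head_mem hb')
  intro hE
  rw [← h1, ← h2] at hE
  simp [hE] at hne

lemma two_mul_le_length_flatten {L : List (List ℕ)} (h : ∀ b ∈ L, 2 ≤ b.length) :
    2 * L.length ≤ L.flatten.length := by
  induction L with
  | nil => simp
  | cons b L ih =>
    have h1 := ih (fun x hx => h x (List.mem_cons_of_mem _ hx))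
    have h2 := h b List.mem_cons_self
    simp only [List.flatten_cons, List.length_append, List.length_cons]
    omega

lemma flatten_take_prefix (L : List (List ℕ)) (w : ℕ) : (L.take w).flatten <+: L.flatten := by
  conv_rhs => rw [← List.take_append_drop w L]
  rw [List.flatten_append]
  exact List.prefix_append _ _

lemma infix_append_right {l u : List ℕ} (v : List ℕ) (h : l <:+: u) : l <:+: u ++ v :=
  h.trans (List.prefix_append u v).isInfix

lemma win {w : ℕ} (hw : 1 ≤ w) {P : List ℕ} (hP : P.length ≤ 2 * w - 1) :
    ∀ {S : List (List ℕ)}, (∀ b ∈ S, 2 ≤ b.length) → P <:+: S.flatten →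
    ∃ i, P <:+: ((S.drop i).take w).flatten := by
  intro S
  induction S with
  | nil => intro _ h; exact ⟨0, by simpa using h⟩
  | cons b S ih =>
    intro hb h
    obtain ⟨s, t, e⟩ := h
    by_cases hsb : b.length ≤ s.length
    · have hx1 : b <+: b ++ S.flatten := List.prefix_append _ _
      have hx2 : s <+: b ++ S.flatten :=
        ⟨P ++ t, by rw [← List.flatten_cons, ← e]; simp [List.append_assoc]⟩
      have hbp : b <+: s := List.prefix_of_prefix_length_le hx1 hx2 hsb
      obtain ⟨s', rfl⟩ := hbp
      have e' : s' ++ P ++ t = S.flatten := by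
        rw [List.flatten_cons] at e
        apply List.append_cancel_left (as := b)
        rw [← e]; simp [List.append_assoc]
      obtain ⟨i, hi⟩ := ih (fun x hx => hb x (List.mem_cons_of_mem _ hx)) ⟨s', t, e'⟩
      exact ⟨i + 1, by simpa using hi⟩
    · push_neg at hsb
      refine ⟨0, ?_⟩
      rw [List.drop_zero]
      by_cases hlen : (b :: S).length ≤ w
      · rw [List.take_of_length_le hlen]
        exact ⟨s, t, e⟩
      · push_neg at hlen
        obtain ⟨w', rfl⟩ : ∃ w', w = w' + 1 := ⟨w - 1, by omega⟩
        have hw' : w' ≤ S.length := by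
          simp only [List.length_cons] at hlen; omega
        have hbl : 2 ≤ b.length := hb b List.mem_cons_self
        have t1 : 2 * w' ≤ ((S.take w').flatten).length := by
          have := two_mul_le_length_flatten
            (L := S.take w') (fun x hx => hb x (List.mem_cons_of_mem _ (List.mem_of_mem_take hx)))
          rwa [List.length_take, min_eq_left hw'] at this
        have hpre1 : s ++ P <+: (b :: S).flatten := ⟨t, by rw [← e, List.append_assoc]⟩
        have hpre2 : ((b :: S).take (w' + 1)).flatten <+: (b :: S).flatten :=
          flatten_take_prefix _ _
        have hlen2 : (s ++ P).length ≤ (((b :: S).take (w' + 1)).flatten).length := by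
          rw [List.take_succ_cons, List.flatten_cons, List.length_append, List.length_append]
          omega
        have hfin := List.prefix_of_prefix_length_le hpre1 hpre2 hlen2
        exact ((List.suffix_append s P).isInfix).trans hfin.isInfix

lemma window (X : List ℕ) (P : List ℕ) (hP : P.length ≤ 7) (h : P <:+: lookSay3 X) :
    ∃ T : List (List ℕ), T.length ≤ 4 ∧ (∀ r ∈ T, r ∈ X.splitBy (fun a b => a == b)) ∧
      T.Chain' (fun a b => a.headI ≠ b.headI) ∧ P <:+: (T.map blk).flatten := by
  rw [lookSay3_eq] at h
  have hb : ∀ b ∈ (X.splitBy (fun a b => a == b)).map blk, 2 ≤ b.length := by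
    intro b hbm
    obtain ⟨r, hr, rfl⟩ := List.mem_map.1 hbm
    have h1 := (run_spec hr).2.1
    have h2 : Nat.digits 3 r.length ≠ [] := Nat.digits_ne_nil_iff_ne_zero.2 (by omega)
    have h3 : 1 ≤ (Nat.digits 3 r.length).length := List.length_pos_iff.2 h2
    simp only [blk, List.length_append, List.length_reverse, List.length_singleton]
    omega
  obtain ⟨i, hi⟩ := win (w := 4) (by norm_num) (by omega) hb h
  refine ⟨((X.splitBy (fun a b => a == b)).drop i).take 4, List.length_take_le _ _,
    fun r hr => List.mem_of_mem_drop (List.mem_of_mem_take hr),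
    ((chain'_headI_ne X).drop i).take 4, ?_⟩
  rwa [← List.map_drop, ← List.map_take] at hi

def p0 (x : ℕ) : ℕ := if x = 0 then 0 else 1
def p1 (x : ℕ) : ℕ := if x = 1 then 1 else 0
def p2 (x : ℕ) : ℕ := if x = 2 then 2 else 0
def p3 (x : ℕ) : ℕ := if 3 ≤ x then 3 else 0

lemma p1_eq_one {x : ℕ} (h : p1 x = 1) : x = 1 := by
  unfold p1 at h; split at h; assumption; omega

lemma p2_eq_two {x : ℕ} (h : p2 x = 2) : x = 2 := by
  unfold p2 at h; split at h; assumption; omega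

def al0 : List (List ℕ × ℕ) :=
  [([1],0),([1],1),([1,0],0),([1,0],1),([1,1],0),([1,1],1)]
def al2 : List (List ℕ × ℕ) :=
  [([0],0),([0],2),([2],0),([2],2),([0,0],0),([0,0],2),([0,2],0),([0,2],2),
   ([2,0],0),([2,0],2)]
def al1 : List (List ℕ × ℕ) :=
  [([1],0),([1],1),([0],0),([0],1),([1,0],0),([1,0],1),([1,1],0),([1,1],1),
   ([0,0],0),([0,0],1),([0,1],0),([0,1],1)]
def al3 : List (List ℕ × ℕ) :=
  [([0],0),([0],3),([0,0],0),([0,0],3)]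
def bl0 : List (List ℕ × ℕ) := [([1],0),([1],1),([1,0],1),([1,1],1)]
def bl2 : List (List ℕ × ℕ) :=
  [([0],0),([0],2),([2],0),([2],2),([0,0],0),([0,0],2),([0,2],0)]
def bl1 : List (List ℕ × ℕ) :=
  [([1],0),([1],1),([0],0),([0],1),([1,0],0),([1,0],1),([1,1],1)]

def wrd (q1 q2 q3 q4 : List ℕ × ℕ) : List ℕ :=
  q1.1 ++ q1.2 :: (q2.1 ++ q2.2 :: (q3.1 ++ q3.2 :: (q4.1 ++ [q4.2])))

set_option maxRecDepth 10000 in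
lemma dec0 : ∀ q1 ∈ al0, ∀ q2 ∈ al0, ∀ q3 ∈ al0, ∀ q4 ∈ al0,
    ¬ [0,0,0] <:+: wrd q1 q2 q3 q4 := by decide

set_option maxRecDepth 10000 in
lemma dec3 : ∀ q1 ∈ al3, ∀ q2 ∈ al3, ∀ q3 ∈ al3, ∀ q4 ∈ al3,
    ¬ [3,3] <:+: wrd q1 q2 q3 q4 := by decide

set_option maxRecDepth 10000 in
lemma dec2 : ∀ q1 ∈ al2, ∀ q2 ∈ al2, ∀ q3 ∈ al2, ∀ q4 ∈ al2,
    ¬(q1.2 = 2 ∧ q2.2 = 2) → ¬(q2.2 = 2 ∧ q3.2 = 2) → ¬(q3.2 = 2 ∧ q4.2 = 2) →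
    ¬ [2,2,2,2] <:+: wrd q1 q2 q3 q4 := by decide

set_option maxRecDepth 100000 in
set_option maxHeartbeats 4000000 in
lemma dec1 : ∀ q1 ∈ al1, ∀ q2 ∈ al1, ∀ q3 ∈ al1, ∀ q4 ∈ al1,
    ¬(q1.2 = 1 ∧ q2.2 = 1) → ¬(q2.2 = 1 ∧ q3.2 = 1) → ¬(q3.2 = 1 ∧ q4.2 = 1) →
    ¬ [1,1,1,1,1,1] <:+: wrd q1 q2 q3 q4 := by decide

set_option maxRecDepth 10000 in
lemma decB0 : ∀ q1 ∈ bl0, ∀ q2 ∈ bl0, ∀ q3 ∈ bl0, ∀ q4 ∈ bl0,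
    ¬ [0,0] <:+: wrd q1 q2 q3 q4 := by decide

set_option maxRecDepth 10000 in
lemma decB2 : ∀ q1 ∈ bl2, ∀ q2 ∈ bl2, ∀ q3 ∈ bl2, ∀ q4 ∈ bl2,
    ¬(q1.2 = 2 ∧ q2.2 = 2) → ¬(q2.2 = 2 ∧ q3.2 = 2) → ¬(q3.2 = 2 ∧ q4.2 = 2) →
    ¬ [2,2,2,2] <:+: wrd q1 q2 q3 q4 := by decide

set_option maxRecDepth 10000 in
lemma decB1 : ∀ q1 ∈ bl1, ∀ q2 ∈ bl1, ∀ q3 ∈ bl1, ∀ q4 ∈ bl1,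
    ¬(q1.2 = 1 ∧ q2.2 = 1) → ¬(q2.2 = 1 ∧ q3.2 = 1) → ¬(q3.2 = 1 ∧ q4.2 = 1) →
    ¬ [1,1,1,1,1] <:+: wrd q1 q2 q3 q4 := by decide

/-- The generic finishing engine. -/
lemma engine (P Q : List ℕ) (π : ℕ → ℕ) (al : List (List ℕ × ℕ)) (adj : ℕ → ℕ → Prop)
    (hPQ : P.map π = Q) (hQ : Q ≠ [])
    (dum : List ℕ × ℕ) (hdum : dum ∈ al) (hadj_dum : ∀ e, adj e dum.2)
    (hdec : ∀ q1 ∈ al, ∀ q2 ∈ al, ∀ q3 ∈ al, ∀ q4 ∈ al,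
      adj q1.2 q2.2 → adj q2.2 q3.2 → adj q3.2 q4.2 → ¬ Q <:+: wrd q1 q2 q3 q4)
    (T : List (List ℕ)) (hTl : T.length ≤ 4)
    (hmem : ∀ r ∈ T, ((Nat.digits 3 r.length).reverse.map π, π r.headI) ∈ al)
    (hadj : T.Chain' (fun a b => adj (π a.headI) (π b.headI)))
    (hinf : P <:+: (T.map blk).flatten) : False := by
  have h2 : Q <:+:
      (T.map (fun r => ((Nat.digits 3 r.length).reverse.map π) ++ [π r.headI])).flatten := by
    have h3 := hinf.map π
    rw [hPQ, List.map_flatten, List.map_map] at h3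
    have he : (List.map π ∘ blk) = fun r => ((Nat.digits 3 r.length).reverse.map π) ++ [π r.headI] := by
      funext r; simp [blk]
    rwa [he] at h3
  clear hinf
  rcases T with _ | ⟨a, T⟩
  · simp only [List.map_nil, List.flatten_nil, List.infix_nil] at h2
    exact hQ h2
  rcases T with _ | ⟨b, T⟩
  · simp only [List.map_cons, List.map_nil, List.flatten_cons, List.flatten_nil,
      List.append_nil] at h2
    refine hdec _ (hmem a (by simp)) _ hdum _ hdum _ hdum
      (hadj_dum _) (hadj_dum _) (hadj_dum _) ?_
    have h3 := infix_append_right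
      (dum.1 ++ dum.2 :: (dum.1 ++ dum.2 :: (dum.1 ++ [dum.2]))) h2
    simpa [wrd, List.append_assoc] using h3
  rcases T with _ | ⟨c, T⟩
  · simp only [List.map_cons, List.map_nil, List.flatten_cons, List.flatten_nil,
      List.append_nil] at h2
    simp only [List.Chain', List.isChain_cons_cons, List.isChain_singleton, and_true] at hadj
    refine hdec _ (hmem a (by simp)) _ (hmem b (by simp)) _ hdum _ hdum
      hadj (hadj_dum _) (hadj_dum _) ?_
    have h3 := infix_append_right (dum.1 ++ dum.2 :: (dum.1 ++ [dum.2])) h2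
    simpa [wrd, List.append_assoc] using h3
  rcases T with _ | ⟨d, T⟩
  · simp only [List.map_cons, List.map_nil, List.flatten_cons, List.flatten_nil,
      List.append_nil] at h2
    simp only [List.Chain', List.isChain_cons_cons, List.isChain_singleton, and_true] at hadj
    refine hdec _ (hmem a (by simp)) _ (hmem b (by simp)) _ (hmem c (by simp)) _ hdum
      hadj.1 hadj.2 (hadj_dum _) ?_
    have h3 := infix_append_right (dum.1 ++ [dum.2]) h2
    simpa [wrd, List.append_assoc] using h3
  · have hT : T = [] := by
      simp only [List.length_cons] at hTl
      exact List.eq_nil_of_length_eq_zero (by omega)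
    subst hT
    simp only [List.map_cons, List.map_nil, List.flatten_cons, List.flatten_nil,
      List.append_nil] at h2
    simp only [List.Chain', List.isChain_cons_cons, List.isChain_singleton, and_true] at hadj
    refine hdec _ (hmem a (by simp)) _ (hmem b (by simp)) _ (hmem c (by simp))
      _ (hmem d (by simp)) hadj.1 hadj.2.1 hadj.2.2 ?_
    simpa [wrd, List.append_assoc] using h2

lemma bridge_al0 (k d : ℕ) (h1 : 1 ≤ k) (h7 : k ≤ 7) :
    ((Nat.digits 3 k).reverse.map p0, p0 d) ∈ al0 := by
  have hd : p0 d = 0 ∨ p0 d = 1 := by unfold p0; split <;> simp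
  interval_cases k <;> rcases hd with h | h <;> rw [h] <;> norm_num [al0, p0]

lemma bridge_al1 (k d : ℕ) (h1 : 1 ≤ k) (h7 : k ≤ 7) :
    ((Nat.digits 3 k).reverse.map p1, p1 d) ∈ al1 := by
  have hd : p1 d = 0 ∨ p1 d = 1 := by unfold p1; split <;> simp
  interval_cases k <;> rcases hd with h | h <;> rw [h] <;> norm_num [al1, p1]

lemma bridge_al2 (k d : ℕ) (h1 : 1 ≤ k) (h7 : k ≤ 7) :
    ((Nat.digits 3 k).reverse.map p2, p2 d) ∈ al2 := by
  have hd : p2 d = 0 ∨ p2 d = 2 := by unfold p2; split <;> simp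
  interval_cases k <;> rcases hd with h | h <;> rw [h] <;> norm_num [al2, p2]

lemma bridge_al3 (k d : ℕ) (h1 : 1 ≤ k) (h7 : k ≤ 7) :
    ((Nat.digits 3 k).reverse.map p3, p3 d) ∈ al3 := by
  have hd : p3 d = 0 ∨ p3 d = 3 := by unfold p3; split <;> simp
  interval_cases k <;> rcases hd with h | h <;> rw [h] <;> norm_num [al3, p3]

lemma L1_0 {X : List ℕ} (hX : ∀ r ∈ X.splitBy (fun a b => a == b), r.length ≤ 7) :
    ¬ [0,0,0] <:+: lookSay3 X := by
  intro h
  obtain ⟨T, hTl, hTm, hTc, hTP⟩ := window X _ (by norm_num) h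
  refine engine [0,0,0] [0,0,0] p0 al0 (fun _ _ => True) (by norm_num [p0]) (by simp)
    ([1],0) (by norm_num [al0]) (fun _ => trivial)
    (fun q1 h1 q2 h2 q3 h3 q4 h4 _ _ _ => dec0 q1 h1 q2 h2 q3 h3 q4 h4)
    T hTl
    (fun r hr => bridge_al0 r.length r.headI (run_spec (hTm r hr)).2.1 (hX r (hTm r hr)))
    (hTc.imp fun _ _ _ => trivial) hTP

lemma L1_1 {X : List ℕ} (hX : ∀ r ∈ X.splitBy (fun a b => a == b), r.length ≤ 7) :
    ¬ [1,1,1,1,1,1] <:+: lookSay3 X := by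
  intro h
  obtain ⟨T, hTl, hTm, hTc, hTP⟩ := window X _ (by norm_num) h
  refine engine _ [1,1,1,1,1,1] p1 al1 (fun e e' => ¬(e = 1 ∧ e' = 1))
    (by norm_num [p1]) (by simp)
    ([0],0) (by norm_num [al1]) (fun _ => by simp)
    dec1 T hTl
    (fun r hr => bridge_al1 r.length r.headI (run_spec (hTm r hr)).2.1 (hX r (hTm r hr)))
    (hTc.imp fun a b hne => fun hc => hne ((p1_eq_one hc.1).trans (p1_eq_one hc.2).symm))
    hTP

lemma L1_2 {X : List ℕ} (hX : ∀ r ∈ X.splitBy (fun a b => a == b), r.length ≤ 7) :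
    ¬ [2,2,2,2] <:+: lookSay3 X := by
  intro h
  obtain ⟨T, hTl, hTm, hTc, hTP⟩ := window X _ (by norm_num) h
  refine engine _ [2,2,2,2] p2 al2 (fun e e' => ¬(e = 2 ∧ e' = 2))
    (by norm_num [p2]) (by simp)
    ([0],0) (by norm_num [al2]) (fun _ => by simp)
    dec2 T hTl
    (fun r hr => bridge_al2 r.length r.headI (run_spec (hTm r hr)).2.1 (hX r (hTm r hr)))
    (hTc.imp fun a b hne => fun hc => hne ((p2_eq_two hc.1).trans (p2_eq_two hc.2).symm))
    hTP

lemma L1_3 {X : List ℕ} (hX : ∀ r ∈ X.splitBy (fun a b => a == b), r.length ≤ 7)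
    (v : ℕ) (hv : 3 ≤ v) : ¬ [v, v] <:+: lookSay3 X := by
  intro h
  obtain ⟨T, hTl, hTm, hTc, hTP⟩ := window X _ (by norm_num) h
  refine engine [v, v] [3,3] p3 al3 (fun _ _ => True)
    (by simp [p3, hv]) (by simp)
    ([0],0) (by norm_num [al3]) (fun _ => trivial)
    (fun q1 h1 q2 h2 q3 h3 q4 h4 _ _ _ => dec3 q1 h1 q2 h2 q3 h3 q4 h4)
    T hTl
    (fun r hr => bridge_al3 r.length r.headI (run_spec (hTm r hr)).2.1 (hX r (hTm r hr)))
    (hTc.imp fun _ _ _ => trivial) hTP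

lemma run_constraints {A r : List ℕ}
    (hA : ∀ r ∈ A.splitBy (fun a b => a == b), r.length ≤ 7)
    (hr : r ∈ (lookSay3 A).splitBy (fun a b => a == b)) :
    1 ≤ r.length ∧ r.length ≤ 5 ∧ (r.headI = 0 → r.length ≤ 2) ∧
      (r.headI = 2 → r.length ≤ 3) ∧ (4 ≤ r.length → r.headI = 1) := by
  obtain ⟨hc, h1, hinf⟩ := run_spec hr
  rw [hc] at hinf
  have hrep : ∀ m, m ≤ r.length → List.replicate m r.headI <:+: lookSay3 A := by
    intro m hm
    have hpre : List.replicate m r.headI <+: List.replicate r.length r.headI :=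
      ⟨List.replicate (r.length - m) r.headI, by rw [← List.replicate_add]; congr 1; omega⟩
    exact hpre.isInfix.trans hinf
  have h0 : r.headI = 0 → r.length ≤ 2 := by
    intro hd; by_contra hk; push_neg at hk
    have := hrep 3 (by omega)
    rw [hd] at this
    exact L1_0 hA this
  have h2 : r.headI = 2 → r.length ≤ 3 := by
    intro hd; by_contra hk; push_neg at hk
    have := hrep 4 (by omega)
    rw [hd] at this
    exact L1_2 hA this
  have h3 : ∀ v, 3 ≤ v → r.headI = v → r.length ≤ 1 := by
    intro v hv hd; by_contra hk; push_neg at hk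
    have := hrep 2 (by omega)
    rw [hd] at this
    exact L1_3 hA v hv this
  have h1' : r.headI = 1 → r.length ≤ 5 := by
    intro hd; by_contra hk; push_neg at hk
    have := hrep 6 (by omega)
    rw [hd] at this
    exact L1_1 hA this
  have hcase : r.headI = 0 ∨ r.headI = 1 ∨ r.headI = 2 ∨ 3 ≤ r.headI := by omega
  refine ⟨h1, ?_, h0, h2, ?_⟩
  · rcases hcase with h | h | h | h
    · have := h0 h; omega
    · have := h1' h; omega
    · have := h2 h; omega
    · have := h3 _ h rfl; omega
  · intro h4
    rcases hcase with h | h | h | h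
    · have := h0 h; omega
    · exact h
    · have := h2 h; omega
    · have := h3 _ h rfl; omega

lemma bridge_bl0 (k d : ℕ) (h1 : 1 ≤ k) (h5 : k ≤ 5)
    (hk0 : d = 0 → k ≤ 2) (hk4 : 4 ≤ k → d = 1) :
    ((Nat.digits 3 k).reverse.map p0, p0 d) ∈ bl0 := by
  have hd : p0 d = 0 ∨ p0 d = 1 := by unfold p0; split <;> simp
  interval_cases k
  · rcases hd with h | h <;> rw [h] <;> norm_num [bl0, p0]
  · rcases hd with h | h <;> rw [h] <;> norm_num [bl0, p0]
  · have hd3 : d ≠ 0 := fun h => by have := hk0 h; omega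
    have h : p0 d = 1 := by simp [p0, hd3]
    rw [h]; norm_num [bl0, p0]
  · have := hk4 (by omega); subst this; norm_num [bl0, p0]
  · have := hk4 (by omega); subst this; norm_num [bl0, p0]

lemma bridge_bl2 (k d : ℕ) (h1 : 1 ≤ k) (h5 : k ≤ 5) (hk4 : 4 ≤ k → d = 1) :
    ((Nat.digits 3 k).reverse.map p2, p2 d) ∈ bl2 := by
  have hd : p2 d = 0 ∨ p2 d = 2 := by unfold p2; split <;> simp
  interval_cases k
  · rcases hd with h | h <;> rw [h] <;> norm_num [bl2, p2]
  · rcases hd with h | h <;> rw [h] <;> norm_num [bl2, p2]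
  · rcases hd with h | h <;> rw [h] <;> norm_num [bl2, p2]
  · have := hk4 (by omega); subst this; norm_num [bl2, p2]
  · have := hk4 (by omega); subst this; norm_num [bl2, p2]

lemma bridge_bl1 (k d : ℕ) (h1 : 1 ≤ k) (h5 : k ≤ 5) (hk4 : 4 ≤ k → d = 1) :
    ((Nat.digits 3 k).reverse.map p1, p1 d) ∈ bl1 := by
  have hd : p1 d = 0 ∨ p1 d = 1 := by unfold p1; split <;> simp
  interval_cases k
  · rcases hd with h | h <;> rw [h] <;> norm_num [bl1, p1]
  · rcases hd with h | h <;> rw [h] <;> norm_num [bl1, p1]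
  · rcases hd with h | h <;> rw [h] <;> norm_num [bl1, p1]
  · have := hk4 (by omega); subst this; norm_num [bl1, p1]
  · have := hk4 (by omega); subst this; norm_num [bl1, p1]

lemma L2_0 {A : List ℕ} (hA : ∀ r ∈ A.splitBy (fun a b => a == b), r.length ≤ 7) :
    ¬ [0,0] <:+: lookSay3 (lookSay3 A) := by
  intro h
  obtain ⟨T, hTl, hTm, hTc, hTP⟩ := window (lookSay3 A) _ (by norm_num) h
  refine engine [0,0] [0,0] p0 bl0 (fun _ _ => True) (by norm_num [p0]) (by simp)
    ([1],0) (by norm_num [bl0]) (fun _ => trivial)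
    (fun q1 h1 q2 h2 q3 h3 q4 h4 _ _ _ => decB0 q1 h1 q2 h2 q3 h3 q4 h4)
    T hTl ?_ (hTc.imp fun _ _ _ => trivial) hTP
  intro r hr
  obtain ⟨c1, c5, c0, c2, c4⟩ := run_constraints hA (hTm r hr)
  exact bridge_bl0 r.length r.headI c1 c5 c0 c4

lemma L2_2 {A : List ℕ} (hA : ∀ r ∈ A.splitBy (fun a b => a == b), r.length ≤ 7) :
    ¬ [2,2,2,2] <:+: lookSay3 (lookSay3 A) := by
  intro h
  obtain ⟨T, hTl, hTm, hTc, hTP⟩ := window (lookSay3 A) _ (by norm_num) h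
  refine engine _ [2,2,2,2] p2 bl2 (fun e e' => ¬(e = 2 ∧ e' = 2))
    (by norm_num [p2]) (by simp)
    ([0],0) (by norm_num [bl2]) (fun _ => by simp)
    decB2 T hTl ?_
    (hTc.imp fun a b hne => fun hc => hne ((p2_eq_two hc.1).trans (p2_eq_two hc.2).symm))
    hTP
  intro r hr
  obtain ⟨c1, c5, c0, c2, c4⟩ := run_constraints hA (hTm r hr)
  exact bridge_bl2 r.length r.headI c1 c5 c4

lemma L2_1 {A : List ℕ} (hA : ∀ r ∈ A.splitBy (fun a b => a == b), r.length ≤ 7) :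
    ¬ [1,1,1,1,1] <:+: lookSay3 (lookSay3 A) := by
  intro h
  obtain ⟨T, hTl, hTm, hTc, hTP⟩ := window (lookSay3 A) _ (by norm_num) h
  refine engine _ [1,1,1,1,1] p1 bl1 (fun e e' => ¬(e = 1 ∧ e' = 1))
    (by norm_num [p1]) (by simp)
    ([0],0) (by norm_num [bl1]) (fun _ => by simp)
    decB1 T hTl ?_
    (hTc.imp fun a b hne => fun hc => hne ((p1_eq_one hc.1).trans (p1_eq_one hc.2).symm))
    hTP
  intro r hr
  obtain ⟨c1, c5, c0, c2, c4⟩ := run_constraints hA (hTm r hr)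
  exact bridge_bl1 r.length r.headI c1 c5 c4

end LS15

theorem stmt_15 (A : List ℕ)
    (hA : ∀ r ∈ A.splitBy (fun a b => a == b), r.length ≤ 7) :
    ¬ [0, 0] <:+: lookSay3 (lookSay3 A) ∧
    ¬ [2, 2, 2, 2] <:+: lookSay3 (lookSay3 A) ∧
    ¬ [1, 1, 1, 1, 1] <:+: lookSay3 (lookSay3 A) :=
  ⟨LS15.L2_0 hA, LS15.L2_2 hA, LS15.L2_1 hA⟩
end
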